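/- arXiv:1708.01910 — 4 statements merged into one kernel-verified Lean document; each statement's English description precedes it below -/
import Mathlib

section
/- Let a_{21} > a_{11} > a_{22} > a_{12} be real numbers, set b_{ij} = a_{ji} (a prisoner's dilemma), and let the empathy matrix have λ_{11} = λ_{22} = 1. If min(λ_{12}, λ_{21}) > (a_{21} − a_{11})/(a_{11} − a_{12}), then in the empathetic game action 1 is no longer dominated by action 2 for either player; precisely, a^Λ_{11} > a^Λ_{21} and b^Λ_{11} > b^Λ_{12}. Hence a strategy dominated in G_I need not be dominated in G_Λ for Λ ≠ I. -/
/-! With unit self-weights, row action 1 beats action 2 against column action 1 iff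
`λ₁₂ (a₁₁ - a₁₂) > a₂₁ - a₁₁`: the empathetic weight on the opponent's loss from defecting
outweighs one's own temptation gain. By the symmetry `bᵢⱼ = aⱼᵢ` the column player faces the
same inequality with `λ₂₁`. -/

theorem add_mul_lt_add_mul_of_div_lt {x x' y y' l : ℝ} (hy : 0 < y - y')
    (hl : (x' - x) / (y - y') < l) : x' + l * y' < x + l * y := by
  rw [div_lt_iff₀ hy] at hl
  linarith

theorem stmt0_general (a11 a12 a21 a22 b11 b12 b21 l11 l12 l21 l22 : ℝ)
    (hpd2 : a11 > a22) (hpd3 : a22 > a12)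
    (hb11 : b11 = a11) (hb12 : b12 = a21) (hb21 : b21 = a12)
    (hl11 : l11 = 1) (hl22 : l22 = 1)
    (hl : min l12 l21 > (a21 - a11) / (a11 - a12)) :
    (l11 * a11 + l12 * b11 > l11 * a21 + l12 * b21) ∧
    (l22 * b11 + l21 * a11 > l22 * b12 + l21 * a12) := by
  subst b11 b12 b21 l11 l22
  have hd : 0 < a11 - a12 := by linarith
  simp only [one_mul]
  exact ⟨add_mul_lt_add_mul_of_div_lt hd (hl.trans_le (min_le_left _ _)),
    add_mul_lt_add_mul_of_div_lt hd (hl.trans_le (min_le_right _ _))⟩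

/-- In a prisoner's dilemma (a21 > a11 > a22 > a12, b_ij = a_ji) with
empathy matrix having λ11 = λ22 = 1, if min(λ12, λ21) > (a21 − a11)/(a11 − a12),
then in the empathetic game action 1 is no longer dominated by action 2 for either
player: a^Λ_11 > a^Λ_21 and b^Λ_11 > b^Λ_12. -/
theorem stmt0 (a11 a12 a21 a22 b11 b12 b21 b22 l11 l12 l21 l22 : ℝ)
    (hpd1 : a21 > a11) (hpd2 : a11 > a22) (hpd3 : a22 > a12)
    (hb11 : b11 = a11) (hb12 : b12 = a21) (hb21 : b21 = a12) (hb22 : b22 = a22)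
    (hl11 : l11 = 1) (hl22 : l22 = 1)
    (hl : min l12 l21 > (a21 - a11) / (a11 - a12)) :
    (l11 * a11 + l12 * b11 > l11 * a21 + l12 * b21) ∧
    (l22 * b11 + l21 * a11 > l22 * b12 + l21 * a12) :=
  stmt0_general a11 a12 a21 a22 b11 b12 b21 l11 l12 l21 l22 hpd2 hpd3 hb11 hb12 hb21 hl11 hl22 hl
end

section
/- Let A be a real 2×2 matrix with β_1 = a_{11} − a_{21}, β_2 = a_{22} − a_{12} and β_1 β_2 ≠ 0, let c_1 ≠ c_2 and V be reals, and suppose the constraint set C = {y ∈ [0,1] : c_1 y + c_2 (1−y) ≤ V} is nonempty. Then the constrained single-population game admits at least one constrained evolutionarily stable strategy m* ∈ C. -/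
/-!
The payoff difference `uA x p - uA y p` equals `(x - y) * advantage p`, where the advantage of
action 1 over action 2 is an affine function of the state `p` that is not identically zero. The
constraint set is a compact interval `C = [l, r]`, and an ESS is found among three candidates:
the right endpoint if the advantage is positive there, the left endpoint if it is negative there,
and otherwise a zero `t` of the advantage in `C`. In the endpoint cases continuity keeps the sign
of the advantage near the endpoint; in the last case the advantage must be decreasing, and
against `ε m + (1 - ε) t` the difference of payoffs is `ε * (-(β₁ + β₂)) * (m - t) ^ 2 > 0`.
-/

open Set Filter Topology

def uA (a11 a12 a21 a22 x m : ℝ) : ℝ :=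
  x * m * a11 + x * (1 - m) * a12 + (1 - x) * m * a21 + (1 - x) * (1 - m) * a22

def IsCESS (a11 a12 a21 a22 : ℝ) (C : Set ℝ) (m' : ℝ) : Prop :=
  m' ∈ C ∧ ∀ m ∈ C, m ≠ m' → ∃ εb ∈ Set.Ioc (0:ℝ) 1, ∀ ε ∈ Set.Ioo (0:ℝ) εb,
    uA a11 a12 a21 a22 m' (ε * m + (1 - ε) * m') >
      uA a11 a12 a21 a22 m (ε * m + (1 - ε) * m')

section

variable {a11 a12 a21 a22 : ℝ}

def advantage (a11 a12 a21 a22 p : ℝ) : ℝ :=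
  uA a11 a12 a21 a22 1 p - uA a11 a12 a21 a22 0 p

lemma advantage_eq (p : ℝ) :
    advantage a11 a12 a21 a22 p = p * (a11 - a21 + (a22 - a12)) - (a22 - a12) := by
  unfold advantage uA; ring

lemma continuous_advantage : Continuous (advantage a11 a12 a21 a22) := by
  unfold advantage uA; fun_prop

lemma uA_sub_uA (x y p : ℝ) :
    uA a11 a12 a21 a22 x p - uA a11 a12 a21 a22 y p = (x - y) * advantage a11 a12 a21 a22 p := by
  unfold advantage uA; ring

lemma IsCESS.of_eventually {C : Set ℝ} {m' : ℝ} (hm' : m' ∈ C)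
    (h : ∀ m ∈ C, m ≠ m' → ∀ᶠ ε in 𝓝[>] 0,
      0 < (m' - m) * advantage a11 a12 a21 a22 (ε * m + (1 - ε) * m')) :
    IsCESS a11 a12 a21 a22 C m' := by
  refine ⟨hm', fun m hm hne => ?_⟩
  obtain ⟨u, hu, hsub⟩ := mem_nhdsGT_iff_exists_Ioo_subset.1 (h m hm hne)
  refine ⟨min u 1, ⟨lt_min hu one_pos, min_le_right _ _⟩, fun ε hε => ?_⟩
  rw [gt_iff_lt, ← sub_pos, uA_sub_uA]
  exact hsub ⟨hε.1, hε.2.trans_le (min_le_left _ _)⟩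

lemma eventually_mul_advantage_pos {m' m : ℝ} (h : 0 < (m' - m) * advantage a11 a12 a21 a22 m') :
    ∀ᶠ ε in 𝓝[>] 0, 0 < (m' - m) * advantage a11 a12 a21 a22 (ε * m + (1 - ε) * m') := by
  have hφ : Continuous fun ε : ℝ =>
      (m' - m) * advantage a11 a12 a21 a22 (ε * m + (1 - ε) * m') :=
    continuous_const.mul (continuous_advantage.comp (by fun_prop))
  refine nhdsWithin_le_nhds ((hφ.tendsto 0).eventually_const_lt ?_)
  simpa using h

lemma advantage_slope_neg_of_sign_change (hβ : a11 - a21 ≠ 0 ∨ a22 - a12 ≠ 0) {l r : ℝ}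
    (hlr : l < r) (hl : 0 ≤ advantage a11 a12 a21 a22 l) (hr : advantage a11 a12 a21 a22 r ≤ 0) :
    a11 - a21 + (a22 - a12) < 0 := by
  rw [advantage_eq] at hl hr
  refine lt_of_le_of_ne (by nlinarith) fun hs => ?_
  rw [hs] at hl hr
  have hβ₂ : a22 - a12 = 0 := by linarith
  have hβ₁ : a11 - a21 = 0 := by linarith
  exact hβ.elim (· hβ₁) (· hβ₂)

lemma mul_advantage_pos_of_root {t m ε : ℝ} (ht : advantage a11 a12 a21 a22 t = 0)
    (hs : a11 - a21 + (a22 - a12) < 0) (hε : 0 < ε) (hm : m ≠ t) :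
    0 < (t - m) * advantage a11 a12 a21 a22 (ε * m + (1 - ε) * t) := by
  have hsq : 0 < (m - t) ^ 2 := sq_pos_of_ne_zero (sub_ne_zero.2 hm)
  rw [advantage_eq] at ht ⊢
  have hquad : (t - m) * ((ε * m + (1 - ε) * t) * (a11 - a21 + (a22 - a12)) - (a22 - a12))
      = ε * -(a11 - a21 + (a22 - a12)) * (m - t) ^ 2 := by
    linear_combination (t - m) * ht
  rw [hquad]
  exact mul_pos (mul_pos hε (neg_pos.2 hs)) hsq

end

theorem exists_isCESS_of_isCompact_of_convex {a11 a12 a21 a22 : ℝ}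
    (hβ : a11 - a21 ≠ 0 ∨ a22 - a12 ≠ 0) {C : Set ℝ} (hcpt : IsCompact C)
    (hconv : Convex ℝ C) (hne : C.Nonempty) : ∃ m', IsCESS a11 a12 a21 a22 C m' := by
  obtain ⟨l, hl⟩ := hcpt.exists_isLeast hne
  obtain ⟨r, hr⟩ := hcpt.exists_isGreatest hne
  rcases lt_or_ge 0 (advantage a11 a12 a21 a22 r) with hr0 | hr0
  · refine ⟨r, IsCESS.of_eventually hr.1 fun m hm hmr => eventually_mul_advantage_pos ?_⟩
    exact mul_pos (sub_pos.2 ((hr.2 hm).lt_of_ne hmr)) hr0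
  rcases lt_or_ge (advantage a11 a12 a21 a22 l) 0 with hl0 | hl0
  · refine ⟨l, IsCESS.of_eventually hl.1 fun m hm hml => eventually_mul_advantage_pos ?_⟩
    exact mul_pos_of_neg_of_neg (sub_neg.2 ((hl.2 hm).lt_of_ne' hml)) hl0
  obtain ⟨t, ht, hroot⟩ := hconv.isPreconnected.intermediate_value hr.1 hl.1
    continuous_advantage.continuousOn ⟨hr0, hl0⟩
  refine ⟨t, IsCESS.of_eventually ht fun m hm hmt => ?_⟩
  have hlr : l < r := by
    by_contra! hrl
    exact hmt (by linarith [hl.2 hm, hr.2 hm, hl.2 ht, hr.2 ht])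
  have hs := advantage_slope_neg_of_sign_change hβ hlr hl0 hr0
  exact eventually_nhdsWithin_of_forall fun ε hε => mul_advantage_pos_of_root hroot hs hε hmt

lemma convex_sep_affine_le (c1 c2 V : ℝ) :
    Convex ℝ {y ∈ Icc (0:ℝ) 1 | c1 * y + c2 * (1 - y) ≤ V} := by
  refine (convex_Icc 0 1).inter fun x hx y hy a b ha hb hab => ?_
  show c1 * (a * x + b * y) + c2 * (1 - (a * x + b * y)) ≤ V
  calc c1 * (a * x + b * y) + c2 * (1 - (a * x + b * y))
      = a * (c1 * x + c2 * (1 - x)) + b * (c1 * y + c2 * (1 - y)) := by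
        linear_combination (-c2) * hab
    _ ≤ a * V + b * V := by gcongr <;> [exact hx; exact hy]
    _ = V := by rw [← add_mul, hab, one_mul]

lemma isCompact_sep_affine_le (c1 c2 V : ℝ) :
    IsCompact {y ∈ Icc (0:ℝ) 1 | c1 * y + c2 * (1 - y) ≤ V} :=
  isCompact_Icc.inter_right <|
    isClosed_le (by fun_prop : Continuous fun y : ℝ => c1 * y + c2 * (1 - y)) continuous_const

theorem stmt6_general (a11 a12 a21 a22 c1 c2 V : ℝ)
    (hβ : (a11 - a21) * (a22 - a12) ≠ 0)
    (hC : ({y ∈ Set.Icc (0:ℝ) 1 | c1 * y + c2 * (1 - y) ≤ V}).Nonempty) :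
    ∃ m', IsCESS a11 a12 a21 a22
      {y ∈ Set.Icc (0:ℝ) 1 | c1 * y + c2 * (1 - y) ≤ V} m' :=
  exists_isCESS_of_isCompact_of_convex (Or.inr (right_ne_zero_of_mul hβ))
    (isCompact_sep_affine_le c1 c2 V) (convex_sep_affine_le c1 c2 V) hC

/-- If β1 β2 ≠ 0, c1 ≠ c2 and the constraint set
C = {y ∈ [0,1] : c1 y + c2 (1−y) ≤ V} is nonempty, then the constrained
single-population game has at least one constrained ESS. -/
theorem stmt6 (a11 a12 a21 a22 c1 c2 V : ℝ)
    (hβ : (a11 - a21) * (a22 - a12) ≠ 0) (hc : c1 ≠ c2)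
    (hC : ({y ∈ Set.Icc (0:ℝ) 1 | c1 * y + c2 * (1 - y) ≤ V}).Nonempty) :
    ∃ m', IsCESS a11 a12 a21 a22
      {y ∈ Set.Icc (0:ℝ) 1 | c1 * y + c2 * (1 - y) ≤ V} m' :=
  stmt6_general a11 a12 a21 a22 c1 c2 V hβ hC
end

section
/- Let a_{ij} (i,j ∈ {1,2}) be real payoffs of a zero-sum discoordination (matching-pennies-type) game, i.e. b_{ij} = −a_{ij}, a_{11} > a_{21}, a_{22} > a_{12}, a_{11} > a_{12}, and a_{22} > a_{21}. Let the empathy matrix satisfy λ_{11} > 0, λ_{12} < 0, λ_{22} < 0 and λ_{21} > 0. Then the empathetic game G_Λ is a coordination game: a^Λ_{11} > a^Λ_{21}, a^Λ_{22} > a^Λ_{12}, b^Λ_{11} > b^Λ_{12}, and b^Λ_{22} > b^Λ_{21}; in particular both (1,1) and (2,2) are strict pure Nash equilibria of G_Λ. -/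
/-!
When `b = -a`, the row player's empathetic payoff is `(λ₁₁ - λ₁₂) a` and the column player's is
`(λ₂₁ - λ₂₂) a`, both positive multiples of `a`. So both players rank outcomes as the row player
did, and the row player's strict preferences in a discoordination game favour the diagonal.
-/

theorem mul_add_mul_neg_lt_mul_add_mul_neg {p q x y : ℝ} (hqp : q < p) (hyx : y < x) :
    p * y + q * -y < p * x + q * -x := by
  have hscale : 0 < (p - q) * (x - y) := mul_pos (sub_pos.mpr hqp) (sub_pos.mpr hyx)
  linarith

/-- In a zero-sum discoordination (matching-pennies-type) game
(b_ij = −a_ij, a11 > a21, a22 > a12, a11 > a12, a22 > a21), if the empathy matrix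
satisfies λ11 > 0, λ12 < 0, λ22 < 0, λ21 > 0, then the empathetic game G_Λ is a
coordination game: a^Λ_11 > a^Λ_21, a^Λ_22 > a^Λ_12, b^Λ_11 > b^Λ_12 and
b^Λ_22 > b^Λ_21; in particular both (1,1) and (2,2) are strict pure Nash
equilibria of G_Λ. -/
theorem stmt10 (a11 a12 a21 a22 b11 b12 b21 b22 l11 l12 l21 l22 : ℝ)
    (hb11 : b11 = -a11) (hb12 : b12 = -a12) (hb21 : b21 = -a21) (hb22 : b22 = -a22)
    (h1 : a11 > a21) (h2 : a22 > a12) (h3 : a11 > a12) (h4 : a22 > a21)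
    (hl11 : l11 > 0) (hl12 : l12 < 0) (hl22 : l22 < 0) (hl21 : l21 > 0) :
    (l11 * a11 + l12 * b11 > l11 * a21 + l12 * b21) ∧
    (l11 * a22 + l12 * b22 > l11 * a12 + l12 * b12) ∧
    (l22 * b11 + l21 * a11 > l22 * b12 + l21 * a12) ∧
    (l22 * b22 + l21 * a22 > l22 * b21 + l21 * a21) := by
  subst hb11 hb12 hb21 hb22
  have hrow : l12 < l11 := hl12.trans hl11
  have hcol : l22 < l21 := hl22.trans hl21
  refine ⟨mul_add_mul_neg_lt_mul_add_mul_neg hrow h1, mul_add_mul_neg_lt_mul_add_mul_neg hrow h2,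
    ?_, ?_⟩
  · rw [add_comm, add_comm (l22 * _)]
    exact mul_add_mul_neg_lt_mul_add_mul_neg hcol h3
  · rw [add_comm, add_comm (l22 * _)]
    exact mul_add_mul_neg_lt_mul_add_mul_neg hcol h4
end

section
/- Let a_{21} > a_{11} > a_{22} > a_{12} be real numbers, set b_{ij} = a_{ji} (a prisoner's dilemma), and let λ_{11} = λ_{22} = 1. If min(λ_{12}, λ_{21}) > max( (a_{21} − a_{11})/(a_{11} − a_{12}), (a_{22} − a_{12})/(a_{21} − a_{22}) ), then (1,1) is the unique pure Nash equilibrium of the empathetic game G_Λ, and (1,1) is exactly the unique Berge solution of the original game G_I; i.e., positive partial mutual altruism leads to the Berge solution in the prisoner's dilemma. -/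
/-!
Under the bound on the empathy weights, cooperation (action `0`) is strictly dominant for both
players of the empathetic game, and a profile of strictly dominant actions is the unique pure
Nash equilibrium. The Berge solutions of `(a, b)` are the Nash equilibria of `(b, a)`, in which
each player is paid the other's payoff; in a prisoner's dilemma cooperation is strictly dominant
there as well.
-/

/-- `(i', j')` is a pure Nash equilibrium of the 2×2 bimatrix game `(a, b)`.
Action "1" of the paper is index `0`, action "2" is index `1`. -/
def IsPureNash (a b : Fin 2 → Fin 2 → ℝ) (i' j' : Fin 2) : Prop :=
  (∀ i : Fin 2, a i' j' ≥ a i j') ∧ (∀ j : Fin 2, b i' j' ≥ b i' j)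

/-- `(i', j')` is a Berge solution of the 2×2 bimatrix game `(a, b)`. -/
def IsBerge (a b : Fin 2 → Fin 2 → ℝ) (i' j' : Fin 2) : Prop :=
  (∀ j : Fin 2, a i' j' ≥ a i' j) ∧ (∀ i : Fin 2, b i' j' ≥ b i j')

/-- `u k l` is the player's payoff when playing `k` against the opponent's `l`; for the column
player of a game `(a, b)` this is `Function.swap b`. -/
def StrictlyDominant {α β : Type*} (u : α → β → ℝ) (k : α) : Prop :=
  ∀ l, ∀ k' ≠ k, u k' l < u k l

theorem strictlyDominant_zero_iff {β : Type*} (u : Fin 2 → β → ℝ) :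
    StrictlyDominant u 0 ↔ ∀ l, u 1 l < u 0 l := by
  simp only [StrictlyDominant, Fin.forall_fin_two, ne_eq, not_true_eq_false, IsEmpty.forall_iff,
    Fin.one_eq_zero_iff, OfNat.ofNat_ne_one, not_false_eq_true, forall_const, true_and]

theorem isPureNash_unique_of_strictlyDominant {a b : Fin 2 → Fin 2 → ℝ} {i₀ j₀ : Fin 2}
    (ha : StrictlyDominant a i₀) (hb : StrictlyDominant (Function.swap b) j₀) :
    IsPureNash a b i₀ j₀ ∧ ∀ i j, IsPureNash a b i j → i = i₀ ∧ j = j₀ := by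
  refine ⟨⟨fun i => ?_, fun j => ?_⟩, fun i j ⟨hi, hj⟩ => ⟨?_, ?_⟩⟩
  · rcases eq_or_ne i i₀ with rfl | hi
    · exact le_rfl
    · exact (ha j₀ i hi).le
  · rcases eq_or_ne j j₀ with rfl | hj
    · exact le_rfl
    · exact (hb i₀ j hj).le
  · by_contra hne
    exact (ha j i hne).not_ge (hi i₀)
  · by_contra hne
    exact (hb i j hne).not_ge (hj j₀)

theorem isBerge_iff_isPureNash_swap {a b : Fin 2 → Fin 2 → ℝ} {i j : Fin 2} :
    IsBerge a b i j ↔ IsPureNash b a i j :=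
  And.comm

/-- The two terms of the max are the altruism weights at which cooperating starts to beat
defecting against a cooperating, resp. a defecting, opponent. -/
theorem strictlyDominant_empathetic {a : Fin 2 → Fin 2 → ℝ} {l : ℝ}
    (h0 : a 0 1 < a 0 0) (h1 : a 1 1 < a 1 0)
    (hl : max ((a 1 0 - a 0 0) / (a 0 0 - a 0 1)) ((a 1 1 - a 0 1) / (a 1 0 - a 1 1)) < l) :
    StrictlyDominant (fun i j => a i j + l * a j i) 0 := by
  obtain ⟨hl0, hl1⟩ := max_lt_iff.mp hl
  rw [div_lt_iff₀ (sub_pos.mpr h0)] at hl0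
  rw [div_lt_iff₀ (sub_pos.mpr h1)] at hl1
  rw [strictlyDominant_zero_iff, Fin.forall_fin_two]
  constructor <;> linarith

/-- In a prisoner's dilemma (a21 > a11 > a22 > a12, b_ij = a_ji) with
λ11 = λ22 = 1 and min(λ12, λ21) > max((a21 − a11)/(a11 − a12), (a22 − a12)/(a21 − a22)),
the profile (1,1) — indices (0,0) — is the unique pure Nash equilibrium of the
empathetic game G_Λ, and it is exactly the unique Berge solution of G_I: positive
partial mutual altruism leads to the Berge solution. -/
theorem stmt12 (a b : Fin 2 → Fin 2 → ℝ) (l12 l21 : ℝ)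
    (hpd1 : a 1 0 > a 0 0) (hpd2 : a 0 0 > a 1 1) (hpd3 : a 1 1 > a 0 1)
    (hb : ∀ i j, b i j = a j i)
    (hl : min l12 l21 >
      max ((a 1 0 - a 0 0) / (a 0 0 - a 0 1)) ((a 1 1 - a 0 1) / (a 1 0 - a 1 1))) :
    (IsPureNash (fun i j => a i j + l12 * b i j) (fun i j => b i j + l21 * a i j) 0 0 ∧
      ∀ i' j' : Fin 2,
        IsPureNash (fun i j => a i j + l12 * b i j) (fun i j => b i j + l21 * a i j) i' j' →
          i' = 0 ∧ j' = 0) ∧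
    (IsBerge a b 0 0 ∧ ∀ i' j' : Fin 2, IsBerge a b i' j' → i' = 0 ∧ j' = 0) := by
  have h0 : a 0 1 < a 0 0 := by linarith
  have h1 : a 1 1 < a 1 0 := by linarith
  obtain ⟨hl12, hl21⟩ := lt_min_iff.mp hl
  obtain rfl : b = Function.swap a := funext₂ hb
  refine ⟨isPureNash_unique_of_strictlyDominant (strictlyDominant_empathetic h0 h1 hl12)
    (strictlyDominant_empathetic h0 h1 hl21), ?_⟩
  have hcoop : StrictlyDominant (Function.swap a) 0 :=
    (strictlyDominant_zero_iff _).mpr (Fin.forall_fin_two.mpr ⟨h0, h1⟩)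
  simpa only [isBerge_iff_isPureNash_swap] using
    isPureNash_unique_of_strictlyDominant hcoop hcoop
end
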